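/- arXiv:1904.01855 — 4 statements merged into one kernel-verified Lean document; each statement's English description precedes it below -/
import Mathlib

section
/- (Generalized completion-of-squares.) Let ψ₁, ψ₂ : ℝ^p → ℝ be strictly convex differentiable functions with Bregman divergences D_{ψ₁}, D_{ψ₂}, and let w₁, w₂ ∈ ℝ^p. If w⋆ ∈ ℝ^p satisfies ∇(ψ₁ + ψ₂)(w⋆) = ∇ψ₁(w₁) + ∇ψ₂(w₂), then for every w ∈ ℝ^p, D_{ψ₁}(w, w₁) + D_{ψ₂}(w, w₂) = D_{ψ₁}(w⋆, w₁) + D_{ψ₂}(w⋆, w₂) + D_{ψ₁+ψ₂}(w, w⋆). Moreover, such a w⋆ is unique: if w⋆ and w⋆' both satisfy the gradient equation, then w⋆ = w⋆'. -/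
/-!
Once the equation for `∇(ψ₁ + ψ₂)(w⋆)` is substituted, the identity is a computation: both sides
are `ψ₁ w + ψ₂ w - ⟪∇ψ₁ w₁ + ∇ψ₂ w₂, w⟫` plus the same constant.
For uniqueness, restricting a strictly convex differentiable `f` to the line through `x ≠ y`
gives `⟪∇f x, y - x⟫ < f y - f x`; adding this to the same inequality with `x` and `y` swapped
shows that `∇f x = ∇f y` is impossible. Apply this to `f = ψ₁ + ψ₂`.
-/

open RealInnerProductSpace

/-- Bregman divergence of a differentiable function `ψ`. -/
noncomputable def bregman {p : ℕ} (ψ : EuclideanSpace ℝ (Fin p) → ℝ)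
    (w w' : EuclideanSpace ℝ (Fin p)) : ℝ :=
  ψ w - ψ w' - ⟪gradient ψ w', w - w'⟫

theorem StrictConvexOn.comp_affineMap_of_injective {𝕜 E F β : Type*} [Field 𝕜] [LinearOrder 𝕜]
    [IsStrictOrderedRing 𝕜] [AddCommGroup E] [AddCommGroup F] [Module 𝕜 E] [Module 𝕜 F]
    [AddCommMonoid β] [PartialOrder β] [SMul 𝕜 β]
    {f : F → β} {s : Set F} (hf : StrictConvexOn 𝕜 s f) (g : E →ᵃ[𝕜] F)
    (hg : Function.Injective g) : StrictConvexOn 𝕜 (g ⁻¹' s) (f ∘ g) :=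
  ⟨hf.1.affine_preimage _, fun x hx y hy hxy a b ha hb hab => by
    simpa only [Function.comp_apply, Convex.combo_affine_apply hab] using
      hf.2 hx hy (hg.ne hxy) ha hb hab⟩

theorem StrictConvexOn.fderiv_sub_lt {E : Type*} [NormedAddCommGroup E] [NormedSpace ℝ E]
    {f : E → ℝ} (hf : StrictConvexOn ℝ Set.univ f) {x y : E}
    (hfx : DifferentiableAt ℝ f x) (hxy : x ≠ y) :
    fderiv ℝ f x (y - x) < f y - f x := by
  set g : ℝ →ᵃ[ℝ] E := AffineMap.lineMap x y
  have hline : StrictConvexOn ℝ Set.univ (f ∘ g) :=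
    hf.comp_affineMap_of_injective g (AffineMap.lineMap_injective ℝ hxy)
  have hderiv : HasDerivAt (f ∘ g) (fderiv ℝ f x (y - x)) 0 :=
    hfx.hasFDerivAt.comp_hasDerivAt_of_eq 0 AffineMap.hasDerivAt_lineMap
      (AffineMap.lineMap_apply_zero x y).symm
  simpa [g, slope_def_field] using
    hline.lt_slope_of_hasDerivAt (Set.mem_univ 0) (Set.mem_univ 1) one_pos hderiv

theorem StrictConvexOn.injective_gradient {E : Type*} [NormedAddCommGroup E]
    [InnerProductSpace ℝ E] [CompleteSpace E] {f : E → ℝ} (hf : StrictConvexOn ℝ Set.univ f)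
    (hfd : Differentiable ℝ f) : Function.Injective (gradient f) := by
  intro x y hxy
  by_contra hne
  have hx := hf.fderiv_sub_lt (hfd x) hne
  have hy := hf.fderiv_sub_lt (hfd y) (Ne.symm hne)
  rw [← inner_gradient_left, hxy, inner_sub_right] at hx
  rw [← inner_gradient_left, inner_sub_right] at hy
  linarith

theorem bregman_add_bregman_eq {p : ℕ} (ψ₁ ψ₂ : EuclideanSpace ℝ (Fin p) → ℝ)
    {w₁ w₂ wstar : EuclideanSpace ℝ (Fin p)}
    (hstar : gradient (fun w => ψ₁ w + ψ₂ w) wstar = gradient ψ₁ w₁ + gradient ψ₂ w₂)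
    (w : EuclideanSpace ℝ (Fin p)) :
    bregman ψ₁ w w₁ + bregman ψ₂ w w₂
      = bregman ψ₁ wstar w₁ + bregman ψ₂ wstar w₂ + bregman (fun u => ψ₁ u + ψ₂ u) w wstar := by
  simp only [bregman, hstar, inner_add_left, inner_sub_right]
  ring

/-- Generalized completion-of-squares for Bregman divergences, together with the
uniqueness of the "center" `w⋆`. -/
theorem bregman_completion_of_squares {p : ℕ}
    (ψ₁ ψ₂ : EuclideanSpace ℝ (Fin p) → ℝ)
    (hψ₁diff : Differentiable ℝ ψ₁) (hψ₂diff : Differentiable ℝ ψ₂)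
    (hψ₁conv : StrictConvexOn ℝ Set.univ ψ₁)
    (hψ₂conv : StrictConvexOn ℝ Set.univ ψ₂)
    (w₁ w₂ wstar : EuclideanSpace ℝ (Fin p))
    (hstar : gradient (fun w => ψ₁ w + ψ₂ w) wstar
        = gradient ψ₁ w₁ + gradient ψ₂ w₂) :
    (∀ w : EuclideanSpace ℝ (Fin p),
        bregman ψ₁ w w₁ + bregman ψ₂ w w₂
          = bregman ψ₁ wstar w₁ + bregman ψ₂ wstar w₂
            + bregman (fun u => ψ₁ u + ψ₂ u) w wstar)
    ∧ (∀ wstar' : EuclideanSpace ℝ (Fin p),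
        gradient (fun w => ψ₁ w + ψ₂ w) wstar'
          = gradient ψ₁ w₁ + gradient ψ₂ w₂ → wstar' = wstar) :=
  ⟨bregman_add_bregman_eq ψ₁ ψ₂ hstar, fun _ hstar' =>
    (hψ₁conv.add hψ₂conv).injective_gradient (hψ₁diff.add hψ₂diff) (hstar'.trans hstar.symm)⟩
end

section
/- (Local identity underlying the risk-sensitive proof.) Let ψ : ℝ^p → ℝ be strictly convex differentiable with Bregman divergence D_ψ, let ℓ : ℝ → ℝ be differentiable with one-dimensional Bregman divergence D_ℓ(a, b) = ℓ(a) − ℓ(b) − ℓ'(b)(a − b), let η > 0, x_i ∈ ℝ^p, y_i ∈ ℝ, z_i ∈ ℝ, and suppose w_i satisfies the recursion ∇ψ(w_i) = ∇ψ(w_{i−1}) + η x_i ℓ'(y_i − z_i). Then for every w ∈ ℝ^p: −(1/η) D_ψ(w, w_{i−1}) − ℓ(y_i − x_iᵀw) + D_ℓ(y_i − x_iᵀw, y_i − z_i) = −(1/η) D_ψ(w, w_i) − (1/η) D_ψ(w_i, w_{i−1}) − ℓ(y_i − x_iᵀw_i) + D_ℓ(y_i − x_iᵀw_i, y_i − z_i).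 -/
open RealInnerProductSpace

/-- One-dimensional Bregman divergence of a differentiable `ℓ : ℝ → ℝ`. -/
noncomputable def bregman1 (ℓ : ℝ → ℝ) (a b : ℝ) : ℝ :=
  ℓ a - ℓ b - deriv ℓ b * (a - b)

/-- Local identity underlying the risk-sensitive optimality proof. -/
theorem risk_sensitive_local_identity {p : ℕ}
    (ψ : EuclideanSpace ℝ (Fin p) → ℝ)
    (hψdiff : Differentiable ℝ ψ)
    (hψconv : StrictConvexOn ℝ Set.univ ψ)
    (ℓ : ℝ → ℝ) (hℓdiff : Differentiable ℝ ℓ)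
    (η : ℝ) (hη : 0 < η)
    (xi : EuclideanSpace ℝ (Fin p)) (yi zi : ℝ)
    (wi wim : EuclideanSpace ℝ (Fin p))
    (hrec : gradient ψ wi = gradient ψ wim + (η * deriv ℓ (yi - zi)) • xi) :
    ∀ w : EuclideanSpace ℝ (Fin p),
      -(1 / η) * bregman ψ w wim - ℓ (yi - ⟪xi, w⟫)
          + bregman1 ℓ (yi - ⟪xi, w⟫) (yi - zi)
        = -(1 / η) * bregman ψ w wi - (1 / η) * bregman ψ wi wim
          - ℓ (yi - ⟪xi, wi⟫) + bregman1 ℓ (yi - ⟪xi, wi⟫) (yi - zi) := by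
  intro w
  simp only [bregman, bregman1, hrec, inner_add_left, real_inner_smul_left,
    inner_sub_right]
  field_simp
  ring
end

section
/- (Telescoped completion-of-squares identity.) Let ψ : ℝ^p → ℝ be strictly convex differentiable with Bregman divergence D_ψ, let ℓ : ℝ → ℝ be differentiable with D_ℓ(a, b) = ℓ(a) − ℓ(b) − ℓ'(b)(a − b), let η > 0, let (x_i, y_i, z_i) ∈ ℝ^p × ℝ × ℝ for i = 1, …, T, and let w₀, …, w_T satisfy the recursion ∇ψ(w_i) = ∇ψ(w_{i−1}) + η x_i ℓ'(y_i − z_i). Then for every w ∈ ℝ^p: −(1/η) D_ψ(w, w₀) − ∑_{i=1}^T ℓ(y_i − x_iᵀw) + ∑_{i=1}^T D_ℓ(y_i − x_iᵀw, y_i − z_i) = −(1/η) D_ψ(w, w_T) − ∑_{i=1}^T [ (1/η) D_ψ(w_i, w_{i−1}) + ℓ(y_i − x_iᵀw_i) − D_ℓ(y_i − x_iᵀw_i, y_i − z_i) ]. -/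
open RealInnerProductSpace

/-- Telescoped completion-of-squares identity used in the risk-sensitive proof. -/
theorem risk_sensitive_telescoped_identity {p : ℕ}
    (ψ : EuclideanSpace ℝ (Fin p) → ℝ)
    (hψdiff : Differentiable ℝ ψ)
    (hψconv : StrictConvexOn ℝ Set.univ ψ)
    (ℓ : ℝ → ℝ) (hℓdiff : Differentiable ℝ ℓ)
    (η : ℝ) (hη : 0 < η)
    (T : ℕ)
    (x : ℕ → EuclideanSpace ℝ (Fin p)) (y z : ℕ → ℝ)
    (w : ℕ → EuclideanSpace ℝ (Fin p))
    (hrec : ∀ i ∈ Finset.Icc 1 T,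
      gradient ψ (w i) = gradient ψ (w (i - 1))
        + (η * deriv ℓ (y i - z i)) • x i) :
    ∀ wv : EuclideanSpace ℝ (Fin p),
      -(1 / η) * bregman ψ wv (w 0)
          - ∑ i ∈ Finset.Icc 1 T, ℓ (y i - ⟪x i, wv⟫)
          + ∑ i ∈ Finset.Icc 1 T, bregman1 ℓ (y i - ⟪x i, wv⟫) (y i - z i)
        = -(1 / η) * bregman ψ wv (w T)
          - ∑ i ∈ Finset.Icc 1 T,
              ((1 / η) * bregman ψ (w i) (w (i - 1)) + ℓ (y i - ⟪x i, w i⟫)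
                - bregman1 ℓ (y i - ⟪x i, w i⟫) (y i - z i)) := by
  intro wv
  have hη0 : η ≠ 0 := ne_of_gt hη
  induction T with
  | zero => simp
  | succ T ih =>
    have hrec' : ∀ i ∈ Finset.Icc 1 T,
        gradient ψ (w i) = gradient ψ (w (i - 1))
          + (η * deriv ℓ (y i - z i)) • x i := by
      intro i hi
      exact hrec i (Finset.Icc_subset_Icc_right (Nat.le_succ T) hi)
    have hT1 : (1 : ℕ) ≤ T + 1 := Nat.one_le_iff_ne_zero.mpr (Nat.succ_ne_zero T)
    rw [Finset.sum_Icc_succ_top hT1, Finset.sum_Icc_succ_top hT1,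
        Finset.sum_Icc_succ_top hT1]
    have key := ih hrec'
    have hg := hrec (T + 1) (Finset.mem_Icc.mpr ⟨hT1, le_refl _⟩)
    simp only [Nat.add_sub_cancel] at hg
    have step :
        -(1 / η) * bregman ψ wv (w T)
            - ℓ (y (T + 1) - ⟪x (T + 1), wv⟫)
            + bregman1 ℓ (y (T + 1) - ⟪x (T + 1), wv⟫) (y (T + 1) - z (T + 1))
          = -(1 / η) * bregman ψ wv (w (T + 1))
            - ((1 / η) * bregman ψ (w (T + 1)) (w T)
                + ℓ (y (T + 1) - ⟪x (T + 1), w (T + 1)⟫)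
                - bregman1 ℓ (y (T + 1) - ⟪x (T + 1), w (T + 1)⟫)
                    (y (T + 1) - z (T + 1))) := by
      simp only [bregman, bregman1, hg, inner_add_left, real_inner_smul_left,
        inner_sub_right]
      field_simp
      ring
    have goal :
        -(1 / η) * bregman ψ wv (w 0)
            - ∑ i ∈ Finset.Icc 1 T, ℓ (y i - ⟪x i, wv⟫)
            + ∑ i ∈ Finset.Icc 1 T, bregman1 ℓ (y i - ⟪x i, wv⟫) (y i - z i)
            - ℓ (y (T + 1) - ⟪x (T + 1), wv⟫)
            + bregman1 ℓ (y (T + 1) - ⟪x (T + 1), wv⟫) (y (T + 1) - z (T + 1))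
          = -(1 / η) * bregman ψ wv (w (T + 1))
            - ∑ i ∈ Finset.Icc 1 T,
                ((1 / η) * bregman ψ (w i) (w (i - 1)) + ℓ (y i - ⟪x i, w i⟫)
                  - bregman1 ℓ (y i - ⟪x i, w i⟫) (y i - z i))
            - ((1 / η) * bregman ψ (w (T + 1)) (w T)
                + ℓ (y (T + 1) - ⟪x (T + 1), w (T + 1)⟫)
                - bregman1 ℓ (y (T + 1) - ⟪x (T + 1), w (T + 1)⟫)
                    (y (T + 1) - z (T + 1))) := by
      rw [key]; linarith [step]
    simp only [Nat.add_sub_cancel]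
    linarith [goal]
end

section
/- (Mirror-mean property of Bregman exponential families.) Let ψ : ℝ^p → ℝ be strictly convex and continuously differentiable, let w₀ ∈ ℝ^p, and suppose the function w ↦ exp(−D_ψ(w, w₀)) is Lebesgue integrable on ℝ^p with positive integral, that w ↦ ∇ψ(w) exp(−D_ψ(w, w₀)) is integrable, and that exp(−D_ψ(w, w₀)) → 0 as ‖w‖ → ∞ (together with the boundary decay needed for integration by parts). Then the random vector w with density p(w) = c·exp(−D_ψ(w, w₀)) (c the normalizing constant) satisfies E[∇ψ(w)] = ∇ψ(w₀), i.e., ∫_{ℝ^p} ∇ψ(w) c·exp(−D_ψ(w, w₀)) dw = ∇ψ(w₀). -/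
/-!
The unnormalised density `G w = exp (-D_ψ(w, w₀))` has gradient `G w • (∇ψ w₀ - ∇ψ w)`.
The integral of a gradient over the whole space vanishes when the function and its gradient are
integrable (integrate by parts against the constant `1` along each direction), so
`∫ G • ∇ψ = (∫ G) • ∇ψ w₀`.
-/

open RealInnerProductSpace MeasureTheory

section Integration

variable {E F : Type*} [NormedAddCommGroup E] [NormedSpace ℝ E] [FiniteDimensional ℝ E]
  [MeasurableSpace E] [BorelSpace E] {μ : Measure E} [μ.IsAddHaarMeasure]
  [NormedAddCommGroup F] [NormedSpace ℝ F]

theorem integral_eq_zero_of_hasLineDerivAt_of_integrable {f f' : E → F} {v : E}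
    (hf : ∀ x, HasLineDerivAt ℝ f (f' x) x v) (hfi : Integrable f μ)
    (hf'i : Integrable f' μ) : ∫ x, f' x ∂μ = 0 := by
  have := integral_bilinear_hasLineDerivAt_right_eq_neg_left_of_integrable
    (B := (ContinuousLinearMap.lsmul ℝ ℝ).flip) (g := fun _ => (1 : ℝ)) (g' := fun _ => 0)
    (μ := μ) (by simpa using hf'i) (by simp) (by simpa using hfi) (fun x _ => hf x)
    (fun x _ => by simpa using (hasFDerivAt_const (1 : ℝ) x).hasLineDerivAt v)
  simpa using this.symm

end Integration

theorem integral_eq_zero_of_hasGradientAt_of_integrable {E : Type*} [NormedAddCommGroup E]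
    [InnerProductSpace ℝ E] [FiniteDimensional ℝ E] [MeasurableSpace E] [BorelSpace E]
    {μ : Measure E} [μ.IsAddHaarMeasure] {f : E → ℝ} {f' : E → E}
    (hf : ∀ x, HasGradientAt f (f' x) x) (hfi : Integrable f μ) (hf'i : Integrable f' μ) :
    ∫ x, f' x ∂μ = 0 := by
  refine integral_eq_zero_of_forall_integral_inner_eq_zero ℝ f' hf'i fun v => ?_
  refine integral_eq_zero_of_hasLineDerivAt_of_integrable (v := v) (fun x => ?_) hfi
    (hf'i.const_inner v)
  simpa [real_inner_comm] using ((hf x).hasFDerivAt.hasLineDerivAt v)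

section Bregman

variable {p : ℕ} {ψ : EuclideanSpace ℝ (Fin p) → ℝ} {w w' : EuclideanSpace ℝ (Fin p)}

theorem hasGradientAt_bregman_left (hψ : DifferentiableAt ℝ ψ w) :
    HasGradientAt (fun v => bregman ψ v w') (gradient ψ w - gradient ψ w') w := by
  have hinner : HasFDerivAt (fun v => ⟪gradient ψ w', v - w'⟫)
      (InnerProductSpace.toDual ℝ _ (gradient ψ w')) w := by
    simpa [inner_sub_right] using
      ((InnerProductSpace.toDual ℝ _ (gradient ψ w')).hasFDerivAt (x := w)).sub_const
        ⟪gradient ψ w', w'⟫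
  rw [hasGradientAt_iff_hasFDerivAt, map_sub]
  exact (hψ.hasGradientAt.hasFDerivAt.sub_const _).sub hinner

theorem hasGradientAt_exp_neg_bregman_left (hψ : DifferentiableAt ℝ ψ w) :
    HasGradientAt (fun v => Real.exp (-bregman ψ v w'))
      (Real.exp (-bregman ψ w w') • (gradient ψ w' - gradient ψ w)) w := by
  rw [hasGradientAt_iff_hasFDerivAt, map_smul, ← neg_sub, map_neg]
  exact (hasGradientAt_bregman_left hψ).hasFDerivAt.neg.exp

end Bregman

theorem bregman_exponential_family_mirror_mean_general {p : ℕ}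
    (ψ : EuclideanSpace ℝ (Fin p) → ℝ)
    (hψdiff : ContDiff ℝ 1 ψ)
    (w₀ : EuclideanSpace ℝ (Fin p))
    (hint : Integrable (fun w : EuclideanSpace ℝ (Fin p) =>
      Real.exp (-bregman ψ w w₀)))
    (hpos : 0 < ∫ w : EuclideanSpace ℝ (Fin p), Real.exp (-bregman ψ w w₀))
    (hint' : Integrable (fun w : EuclideanSpace ℝ (Fin p) =>
      Real.exp (-bregman ψ w w₀) • gradient ψ w)) :
    (∫ w : EuclideanSpace ℝ (Fin p), Real.exp (-bregman ψ w w₀))⁻¹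
        • (∫ w : EuclideanSpace ℝ (Fin p), Real.exp (-bregman ψ w w₀) • gradient ψ w)
      = gradient ψ w₀ := by
  have hint₀ := hint.smul_const (gradient ψ w₀)
  have hscore : ∫ w, Real.exp (-bregman ψ w w₀) • (gradient ψ w₀ - gradient ψ w) = 0 :=
    integral_eq_zero_of_hasGradientAt_of_integrable
      (fun w => hasGradientAt_exp_neg_bregman_left (hψdiff.differentiable one_ne_zero w)) hint
      (by simp only [smul_sub]; exact hint₀.sub hint')
  simp only [smul_sub] at hscore
  rw [integral_sub hint₀ hint', integral_smul_const, sub_eq_zero] at hscore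
  rw [← hscore, smul_smul, inv_mul_cancel₀ hpos.ne', one_smul]

/-- Mirror-mean property of the Bregman exponential family: if `w` has density
proportional to `exp(−D_ψ(·, w₀))`, then `E[∇ψ(w)] = ∇ψ(w₀)`. -/
theorem bregman_exponential_family_mirror_mean {p : ℕ}
    (ψ : EuclideanSpace ℝ (Fin p) → ℝ)
    (hψdiff : ContDiff ℝ 1 ψ)
    (hψconv : StrictConvexOn ℝ Set.univ ψ)
    (w₀ : EuclideanSpace ℝ (Fin p))
    (hint : Integrable (fun w : EuclideanSpace ℝ (Fin p) =>
      Real.exp (-bregman ψ w w₀)))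
    (hpos : 0 < ∫ w : EuclideanSpace ℝ (Fin p), Real.exp (-bregman ψ w w₀))
    (hint' : Integrable (fun w : EuclideanSpace ℝ (Fin p) =>
      Real.exp (-bregman ψ w w₀) • gradient ψ w))
    (hdecay : Filter.Tendsto (fun w : EuclideanSpace ℝ (Fin p) =>
      Real.exp (-bregman ψ w w₀)) (Filter.cocompact _) (nhds 0)) :
    (∫ w : EuclideanSpace ℝ (Fin p), Real.exp (-bregman ψ w w₀))⁻¹
        • (∫ w : EuclideanSpace ℝ (Fin p), Real.exp (-bregman ψ w w₀) • gradient ψ w)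
      = gradient ψ w₀ :=
  bregman_exponential_family_mirror_mean_general ψ hψdiff w₀ hint hpos hint'
end
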